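/- For every j ≥ 1, the composition f_j∘Z satisfies, in ℝ[[v]]: αβ·(1−v³)·(f_j∘Z) = v^j·(vα+β)·(α + vβ + βv²). -/

import Mathlib

open PowerSeries Filter

noncomputable section

/-- Composition `h ∘ Z` of formal power series; this is the usual composition whenever
`Z` has zero constant term (then for each `n` only finitely many terms contribute). -/
def psComp (h Z : PowerSeries ℝ) : PowerSeries ℝ :=
  PowerSeries.mk fun n => ∑' k : ℕ, (PowerSeries.coeff k h) * (PowerSeries.coeff n (Z ^ k))

/-- The substitution series `Z = v · ((α+βv)(β+αv))⁻¹ ∈ ℝ[[v]]`; the inverse exists since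
the constant term `αβ` is nonzero, and `Z` has zero constant term. -/
def Zsub (α β : ℝ) : PowerSeries ℝ :=
  PowerSeries.X * (((PowerSeries.C α) + (PowerSeries.C β) * PowerSeries.X) *
    ((PowerSeries.C β) + (PowerSeries.C α) * PowerSeries.X))⁻¹

/-! Write `F_N = f_N ∘ Z`. Since `Z · (α+βv)(β+αv) = v` and
`(α+βv)(β+αv) = αβ(1+v²) + (α²+β²)v`, clearing the denominator turns the bulk equations into
`(1+v²) F_{N+1} = v (F_N + F_{N+2})`, i.e. `F_{N+1} - v F_N = v (F_{N+2} - v F_{N+1})`.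
Iterating, `F_{N+1} - v F_N` is divisible by every power of `v`, hence zero: the substituted
`f_N` (and likewise `g_N`) are geometric in `v`. The four boundary equations then form a
linear system for `F₀, F₁, fQ ∘ Z, G₀` over the domain `ℝ⟦v⟧`, solved by elimination. -/

namespace PowerSeries

variable {R : Type*}

theorem eq_zero_of_eq_X_mul_succ [Semiring R] {D : ℕ → R⟦X⟧} (h : ∀ N, D N = X * D (N + 1))
    (N : ℕ) : D N = 0 := by
  have hpow : ∀ k N, D N = X ^ k * D (N + k) := by
    intro k
    induction k with
    | zero => simp
    | succ k ih => intro N; rw [ih, h (N + k), pow_succ, mul_assoc, add_assoc]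
  ext n
  rw [hpow (n + 1) N, coeff_X_pow_mul', if_neg (by omega), map_zero]

theorem eq_X_mul_of_recurrence [CommRing R] {F : ℕ → R⟦X⟧}
    (h : ∀ N, (1 + X ^ 2) * F (N + 1) = X * (F N + F (N + 2))) (N : ℕ) :
    F (N + 1) = X * F N :=
  sub_eq_zero.mp <| eq_zero_of_eq_X_mul_succ (D := fun N => F (N + 1) - X * F N)
    (fun N => by linear_combination h N) N

theorem eq_X_pow_mul_of_eq_X_mul [Semiring R] {F : ℕ → R⟦X⟧} (h : ∀ N, F (N + 1) = X * F N)
    (N : ℕ) : F N = X ^ N * F 0 := by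
  induction N with
  | zero => simp
  | succ N ih => rw [h, ih, pow_succ', mul_assoc]

end PowerSeries

section Field

variable {K : Type*} [Field K] {α β : K}

def ZsubDen (α β : K) : K⟦X⟧ := (C α + C β * X) * (C β + C α * X)

theorem ZsubDen_eq (α β : K) :
    ZsubDen α β = C (α * β) * (1 + X ^ 2) + C (α ^ 2 + β ^ 2) * X := by
  simp only [ZsubDen, map_mul, map_add, map_pow]
  ring

theorem eq_X_mul_of_ZsubDen_recurrence (hα : α ≠ 0) (hβ : β ≠ 0) {F : ℕ → K⟦X⟧}
    (h : ∀ N, ZsubDen α β * F (N + 1) =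
      C (α * β) * X * F N + C (α * β) * X * F (N + 2) + C (α ^ 2 + β ^ 2) * X * F (N + 1))
    (N : ℕ) : F (N + 1) = X * F N := by
  refine eq_X_mul_of_recurrence (fun N => ?_) N
  refine mul_left_cancel₀ ((map_ne_zero_iff _ C_injective).mpr (mul_ne_zero hα hβ)) ?_
  linear_combination h N - F (N + 1) * ZsubDen_eq α β

theorem boundary_system_solution (hα : α ≠ 0) (hβ : β ≠ 0) {F₀ F₁ Q G₀ : K⟦X⟧}
    (hF₁ : ZsubDen α β * F₁ = C (α * β) * X * F₀ + C (α * β) * X * (X * F₁)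
      + C (α ^ 2 + β ^ 2) * X * F₁ + C (β ^ 2) * X * Q)
    (hF₀ : ZsubDen α β * F₀ = ZsubDen α β + C (α * β) * X * F₁
      + C (α ^ 2 + β ^ 2) * X * F₀ + C (α * β) * X * Q)
    (hQ : ZsubDen α β * Q = C (α * β) * X * G₀ + C (α ^ 2) * X * Q)
    (hG₀ : ZsubDen α β * G₀ = C (α * β) * X * F₀ + C (α * β) * X * (X * G₀)
      + C (α * β) * X * Q + C (α ^ 2 + β ^ 2) * X * G₀) :
    C (α * β) * (1 - X ^ 3) * F₁ = X * (X * C α + C β) * (C α + X * C β + C β * X ^ 2) := by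
  simp only [ZsubDen, map_mul, map_add, map_pow] at hF₁ hF₀ hQ hG₀ ⊢
  have hCα : (C α : K⟦X⟧) ≠ 0 := (map_ne_zero_iff _ C_injective).mpr hα
  have hCβ : (C β : K⟦X⟧) ≠ 0 := (map_ne_zero_iff _ C_injective).mpr hβ
  have hlin : C α + C β * X ≠ 0 := fun h => hα (by simpa using congrArg constantCoeff h)
  have g₀_eq : G₀ = X * F₀ + X * Q :=
    mul_left_cancel₀ (mul_ne_zero hCα hCβ) (by linear_combination hG₀)
  have q_eq : (C α + C β * X) * Q = C α * X ^ 2 * F₀ :=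
    mul_left_cancel₀ hCβ (by linear_combination hQ + C α * C β * X * g₀_eq)
  have f₁_eq : C α * F₁ = C α * X * F₀ + C β * X * Q :=
    mul_left_cancel₀ hCβ (by linear_combination hF₁)
  have f₁_eq_f₀ : (C α + C β * X) * F₁ = X * (C α + C β * X + C β * X ^ 2) * F₀ :=
    mul_left_cancel₀ hCα (by linear_combination (C α + C β * X) * f₁_eq + C β * X * q_eq)
  have f₀_eq : C α * C β * (1 - X ^ 3) * F₀ = (C α + C β * X) * (C β + C α * X) := by
    refine mul_left_cancel₀ hlin ?_
    linear_combination (C α + C β * X) * hF₀ + C α * C β * X * f₁_eq_f₀ + C α * C β * X * q_eq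
  refine mul_left_cancel₀ hlin ?_
  linear_combination C α * C β * (1 - X ^ 3) * f₁_eq_f₀ + X * (C α + C β * X + C β * X ^ 2) * f₀_eq

end Field

section Composition

variable {Z : ℝ⟦X⟧}

theorem psComp_eq_subst (hZ : constantCoeff Z = 0) (h : ℝ⟦X⟧) : psComp h Z = h.subst Z := by
  ext n
  rw [psComp, coeff_mk, coeff_subst' (HasSubst.of_constantCoeff_zero' hZ)]
  exact tsum_eq_finsum (coeff_subst_finite' (HasSubst.of_constantCoeff_zero' hZ) h n)

theorem psComp_add (hZ : constantCoeff Z = 0) (h₁ h₂ : ℝ⟦X⟧) :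
    psComp (h₁ + h₂) Z = psComp h₁ Z + psComp h₂ Z := by
  simp only [psComp_eq_subst hZ, subst_add (HasSubst.of_constantCoeff_zero' hZ)]

theorem psComp_one (hZ : constantCoeff Z = 0) : psComp 1 Z = 1 := by
  rw [psComp_eq_subst hZ, ← coe_substAlgHom (HasSubst.of_constantCoeff_zero' hZ), map_one]

theorem psComp_C_mul_X_mul (hZ : constantCoeff Z = 0) (c : ℝ) (h : ℝ⟦X⟧) :
    psComp (C c * X * h) Z = C c * Z * psComp h Z := by
  have hZ' := HasSubst.of_constantCoeff_zero' hZ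
  simp only [psComp_eq_subst hZ, ← coe_substAlgHom hZ', map_mul, substAlgHom_X]
  rw [← algebraMap_eq, AlgHom.commutes]

theorem constantCoeff_Zsub (α β : ℝ) : constantCoeff (Zsub α β) = 0 := by
  simp [Zsub]

theorem ZsubDen_mul_psComp_C_mul_X_mul {α β : ℝ} (hα : α ≠ 0) (hβ : β ≠ 0) (c : ℝ)
    (h : ℝ⟦X⟧) :
    ZsubDen α β * psComp (C c * X * h) (Zsub α β) = C c * X * psComp h (Zsub α β) := by
  have hZ : Zsub α β * ZsubDen α β = X := by
    rw [Zsub, ZsubDen, mul_assoc, PowerSeries.inv_mul_cancel _ (by simp [hα, hβ]), mul_one]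
  rw [psComp_C_mul_X_mul (constantCoeff_Zsub α β), ← hZ]
  ring

end Composition

theorem twoStep_fj_substituted_general
    (α β : ℝ) (hα0 : 0 < α) (hα1 : α < 1) (hβ : β = 1 - α)
    (f g : ℕ → PowerSeries ℝ) (fQ : PowerSeries ℝ)
    (hf : ∀ N : ℕ, f (N + 2) =
      C (α * β) * X * f (N + 1) + C (α * β) * X * f (N + 3)
        + C (α ^ 2 + β ^ 2) * X * f (N + 2))
    (hf1 : f 1 = C (α * β) * X * f 0 + C (α * β) * X * f 2
        + C (α ^ 2 + β ^ 2) * X * f 1 + C (β ^ 2) * X * fQ)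
    (hf0 : f 0 = 1 + C (α * β) * X * f 1 + C (α ^ 2 + β ^ 2) * X * f 0
        + C (α * β) * X * fQ)
    (hfQ : fQ = C (α * β) * X * g 0 + C (α ^ 2) * X * fQ)
    (hg : ∀ N : ℕ, g (N + 1) = C (α * β) * X * g N + C (α * β) * X * g (N + 2)
        + C (α ^ 2 + β ^ 2) * X * g (N + 1))
    (hg0 : g 0 = C (α * β) * X * f 0 + C (α * β) * X * g 1
        + C (α * β) * X * fQ + C (α ^ 2 + β ^ 2) * X * g 0) :
    ∀ j : ℕ, 1 ≤ j → C (α * β) * (1 - X ^ 3) * psComp (f j) (Zsub α β) =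
      X ^ j * (X * C α + C β) * (C α + X * C β + C β * X ^ 2) := by
  have hα : α ≠ 0 := hα0.ne'
  have hβ0 : β ≠ 0 := by rw [hβ, sub_ne_zero]; exact hα1.ne'
  have transfer : ∀ {u v : ℝ⟦X⟧}, u = v →
      ZsubDen α β * psComp u (Zsub α β) = ZsubDen α β * psComp v (Zsub α β) := fun h => h ▸ rfl
  have Hf := fun N => transfer (hf N)
  have Hg := fun N => transfer (hg N)
  have H₁ := transfer hf1
  have H₀ := transfer hf0
  have HQ := transfer hfQ
  have HG₀ := transfer hg0
  simp only [psComp_add (constantCoeff_Zsub α β), psComp_one (constantCoeff_Zsub α β), mul_add,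
    mul_one, ZsubDen_mul_psComp_C_mul_X_mul hα hβ0] at Hf Hg H₁ H₀ HQ HG₀
  have shift_f : ∀ N, psComp (f (N + 2)) (Zsub α β) = X * psComp (f (N + 1)) (Zsub α β) :=
    eq_X_mul_of_ZsubDen_recurrence hα hβ0 (F := fun N => psComp (f (N + 1)) (Zsub α β)) Hf
  have shift_g : ∀ N, psComp (g (N + 1)) (Zsub α β) = X * psComp (g N) (Zsub α β) :=
    eq_X_mul_of_ZsubDen_recurrence hα hβ0 (F := fun N => psComp (g N) (Zsub α β)) Hg
  rw [shift_f 0] at H₁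
  rw [shift_g 0] at HG₀
  have hf₁ := boundary_system_solution hα hβ0 H₁ H₀ HQ HG₀
  intro j hj
  obtain ⟨m, rfl⟩ : ∃ m, j = m + 1 := ⟨j - 1, by omega⟩
  rw [eq_X_pow_mul_of_eq_X_mul (F := fun N => psComp (f (N + 1)) (Zsub α β)) shift_f m]
  linear_combination X ^ m * hf₁

/-- For every `j ≥ 1`: `αβ(1-v³)·(f_j∘Z) = v^j(vα+β)(α+vβ+βv²)`. -/
theorem twoStep_fj_substituted
    (α β : ℝ) (hα0 : 0 < α) (hα1 : α < 1) (hβ : β = 1 - α)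
    (f g : ℕ → PowerSeries ℝ) (fQ : PowerSeries ℝ)
    (hf : ∀ N : ℕ, f (N + 2) =
      C (α * β) * X * f (N + 1) + C (α * β) * X * f (N + 3)
        + C (α ^ 2 + β ^ 2) * X * f (N + 2))
    (hf1 : f 1 = C (α * β) * X * f 0 + C (α * β) * X * f 2
        + C (α ^ 2 + β ^ 2) * X * f 1 + C (β ^ 2) * X * fQ)
    (hf0 : f 0 = 1 + C (α * β) * X * f 1 + C (α ^ 2 + β ^ 2) * X * f 0
        + C (α * β) * X * fQ)
    (hfQ : fQ = C (α * β) * X * g 0 + C (α ^ 2) * X * fQ)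
    (hg : ∀ N : ℕ, g (N + 1) = C (α * β) * X * g N + C (α * β) * X * g (N + 2)
        + C (α ^ 2 + β ^ 2) * X * g (N + 1))
    (hg0 : g 0 = C (α * β) * X * f 0 + C (α * β) * X * g 1
        + C (α * β) * X * fQ + C (α ^ 2 + β ^ 2) * X * g 0)
    (hsupp : ∀ m N : ℕ, m < N → coeff m (f N) = 0 ∧ coeff m (g N) = 0) :
    ∀ j : ℕ, 1 ≤ j → C (α * β) * (1 - X ^ 3) * psComp (f j) (Zsub α β) =
      X ^ j * (X * C α + C β) * (C α + X * C β + C β * X ^ 2) :=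
  twoStep_fj_substituted_general α β hα0 hα1 hβ f g fQ hf hf1 hf0 hfQ hg hg0
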